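/- arXiv:2105.07563 — 2 statements merged into one kernel-verified Lean document; each statement's English description precedes it below -/
import Mathlib

section
/- Let u = ε + Zv with ε, v independent, E[ε]=0, Cov(ε)=R_e, E[v]=0, Cov(v)=R_v, with standardized fourth moments E[((R_e^{-1/2}ε)_i)^4]=K_e+3 and E[((R_v^{-1/2}v)_i)^4]=K_v+3, and the coordinates of R_e^{-1/2}ε independent and the coordinates of R_v^{-1/2}v independent. Then for symmetric N×N matrices C, D, with Σ = R_e + Z R_v Zᵀ: E[(uᵀCu)(uᵀDu)] = 2 tr(CΣDΣ) + tr(CΣ) tr(DΣ) + K_e h_e(C,D) + K_v h_v(C,D), where h_e(C,D) = ∑_{i=1}^N (R_e^{1/2} C R_e^{1/2})_{ii}(R_e^{1/2} D R_e^{1/2})_{ii} and h_v(C,D) = ∑_{i=1}^m (R_v^{1/2} Zᵀ C Z R_v^{1/2})_{ii}(R_v^{1/2} Zᵀ D Z R_v^{1/2})_{ii}. -/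
open MeasureTheory ProbabilityTheory Matrix

/-!
Put `x = Sₑ⁻¹ ε`, `w = Sᵥ⁻¹ v` and `y = (x, w)`. Then `u = F y` with `F = [Sₑ | Z Sᵥ]`,
`F Fᵀ = Σ`, and `y` has independent standardized coordinates, so `uᵀ C u = yᵀ A y` with
`A = Fᵀ C F` (and `B = Fᵀ D F`). In `E[(yᵀ A y)(yᵀ B y)] = ∑ A_ij B_kl E[y_i y_j y_k y_l]`
only index patterns that pair up survive; they give `tr A tr B + 2 tr(A B)` plus the excess
kurtosis `∑ A_ii B_ii (E y_i⁴ - 3)` on the diagonal. The traces are those of `CΣ`, `DΣ`,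
`CΣDΣ`, and the diagonal blocks of `A` are `Sₑ C Sₑ` and `Sᵥ Zᵀ C Z Sᵥ`.
-/

section Independence

variable {Ω : Type*} [MeasurableSpace Ω] {μ : Measure Ω} [IsProbabilityMeasure μ]

lemma iIndepFun_sumElim {ι κ β : Type*} [Fintype ι] [Fintype κ] [MeasurableSpace β]
    {X : Ω → ι → β} {Y : Ω → κ → β}
    (hXm : ∀ i, Measurable fun ω => X ω i) (hYm : ∀ j, Measurable fun ω => Y ω j)
    (hX : iIndepFun (fun i ω => X ω i) μ) (hY : iIndepFun (fun j ω => Y ω j) μ)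
    (hXY : IndepFun X Y μ) :
    iIndepFun (fun i ω => Sum.elim (X ω) (Y ω) i) μ := by
  have hXm' : Measurable X := measurable_pi_lambda _ hXm
  have hYm' : Measurable Y := measurable_pi_lambda _ hYm
  rw [iIndepFun_iff_map_fun_eq_pi_map
    (Sum.forall.2 ⟨fun i => (hXm i).aemeasurable, fun j => (hYm j).aemeasurable⟩)]
  have : (fun ω i => Sum.elim (X ω) (Y ω) i)
      = (MeasurableEquiv.sumPiEquivProdPi fun _ => β).symm ∘ fun ω => (X ω, Y ω) := rfl
  rw [this, ← Measure.map_map (MeasurableEquiv.measurable _) (hXm'.prodMk hYm'),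
    (indepFun_iff_map_prod_eq_prod_map_map hXm'.aemeasurable hYm'.aemeasurable).1 hXY,
    hX.map_fun_eq_pi_map fun i => (hXm i).aemeasurable,
    hY.map_fun_eq_pi_map fun j => (hYm j).aemeasurable]
  exact (measurePreserving_sumPiEquivProdPi_symm
    fun i => μ.map fun ω => Sum.elim (X ω) (Y ω) i).map_eq

end Independence

section FourthMoments

variable {Ω : Type*} [MeasurableSpace Ω] {μ : Measure Ω}

lemma abs_mul_mul_mul_le (a b c d : ℝ) :
    |a * b * c * d| ≤ (a ^ 4 + b ^ 4 + c ^ 4 + d ^ 4) / 4 := by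
  rw [abs_le]
  constructor <;> nlinarith [sq_nonneg (a * b + c * d), sq_nonneg (a * b - c * d),
    sq_nonneg (a ^ 2 - b ^ 2), sq_nonneg (c ^ 2 - d ^ 2)]

lemma integrable_mul_mul_mul_of_pow_four {f g h k : Ω → ℝ} (hfm : Measurable f)
    (hgm : Measurable g) (hhm : Measurable h) (hkm : Measurable k)
    (hf : Integrable (fun ω => f ω ^ 4) μ) (hg : Integrable (fun ω => g ω ^ 4) μ)
    (hh : Integrable (fun ω => h ω ^ 4) μ) (hk : Integrable (fun ω => k ω ^ 4) μ) :
    Integrable (fun ω => f ω * g ω * h ω * k ω) μ :=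
  ((((hf.add hg).add hh).add hk).div_const 4).mono'
    (((hfm.mul hgm).mul hhm).mul hkm).aestronglyMeasurable
    (.of_forall fun ω => abs_mul_mul_mul_le (f ω) (g ω) (h ω) (k ω))

variable {ι : Type*} {X : Ω → ι → ℝ}

lemma integral_mul_mul_mul_eq_zero_of_ne (hXm : ∀ i, Measurable fun ω => X ω i)
    (hX : iIndepFun (fun i ω => X ω i) μ) {a b c d : ι} (hd : ∫ ω, X ω d ∂μ = 0)
    (hda : d ≠ a) (hdb : d ≠ b) (hdc : d ≠ c) :
    ∫ ω, X ω a * X ω b * X ω c * X ω d ∂μ = 0 := by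
  classical
  have hdisj : Disjoint ({a, b, c} : Finset ι) {d} := by simp [hda, hdb, hdc]
  have hφ : Measurable fun v : ({a, b, c} : Finset ι) → ℝ =>
      v ⟨a, by simp⟩ * v ⟨b, by simp⟩ * v ⟨c, by simp⟩ := by fun_prop
  have hψ : Measurable fun v : ({d} : Finset ι) → ℝ => v ⟨d, by simp⟩ := by fun_prop
  have hind : IndepFun (fun ω => X ω a * X ω b * X ω c) (fun ω => X ω d) μ :=
    (hX.indepFun_finset _ _ hdisj hXm).comp hφ hψ
  rw [hind.integral_fun_mul_eq_mul_integral
    (((hXm a).mul (hXm b)).mul (hXm c)).aestronglyMeasurable (hXm d).aestronglyMeasurable, hd,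
    mul_zero]

lemma integral_sq_mul_sq_of_ne (hXm : ∀ i, Measurable fun ω => X ω i)
    (hX : iIndepFun (fun i ω => X ω i) μ) {a b : ι} (hab : a ≠ b) :
    ∫ ω, X ω a ^ 2 * X ω b ^ 2 ∂μ = (∫ ω, X ω a ^ 2 ∂μ) * ∫ ω, X ω b ^ 2 ∂μ :=
  ((hX.indepFun hab).comp (measurable_id.pow_const 2) (measurable_id.pow_const 2)
    ).integral_fun_mul_eq_mul_integral
    ((hXm a).pow_const 2).aestronglyMeasurable ((hXm b).pow_const 2).aestronglyMeasurable

lemma integral_mul_mul_mul_eq [DecidableEq ι] (hXm : ∀ i, Measurable fun ω => X ω i)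
    (hX : iIndepFun (fun i ω => X ω i) μ) (hX1 : ∀ i, ∫ ω, X ω i ∂μ = 0)
    (hX2 : ∀ i, ∫ ω, X ω i ^ 2 ∂μ = 1) (i j k l : ι) :
    ∫ ω, X ω i * X ω j * X ω k * X ω l ∂μ =
      (if i = j then (1:ℝ) else 0) * (if k = l then 1 else 0)
      + (if i = k then (1:ℝ) else 0) * (if j = l then 1 else 0)
      + (if i = l then (1:ℝ) else 0) * (if j = k then 1 else 0)
      + (if i = j ∧ i = k ∧ i = l then (∫ ω, X ω i ^ 4 ∂μ) - 3 else 0) := by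
  have lonely : ∀ {a b c d : ι}, d ≠ a → d ≠ b → d ≠ c →
      ∫ ω, X ω a * X ω b * X ω c * X ω d ∂μ = 0 :=
    integral_mul_mul_mul_eq_zero_of_ne hXm hX (hX1 _)
  have pair : ∀ {a b : ι}, a ≠ b → ∫ ω, X ω a ^ 2 * X ω b ^ 2 ∂μ = 1 := fun hab => by
    rw [integral_sq_mul_sq_of_ne hXm hX hab, hX2, hX2, one_mul]
  rcases eq_or_ne i j with rfl | hij
  · rcases eq_or_ne i k with rfl | hik
    · rcases eq_or_ne i l with rfl | hil
      · have h4 : ∀ ω, X ω i * X ω i * X ω i * X ω i = X ω i ^ 4 := fun ω => by ring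
        simp only [h4, and_self, if_true]
        ring
      · simp [hil]
        exact lonely (Ne.symm hil) (Ne.symm hil) (Ne.symm hil)
    · rcases eq_or_ne i l with rfl | hil
      · simp [hik, Ne.symm hik]
        convert lonely (d := k) (Ne.symm hik) (Ne.symm hik) (Ne.symm hik) using 3
        ring
      · rcases eq_or_ne k l with rfl | hkl
        · simp [hik]
          convert pair hik using 3
          ring
        · simp [hik, hil, hkl]
          exact lonely (Ne.symm hil) (Ne.symm hil) (Ne.symm hkl)
  · rcases eq_or_ne i k with rfl | hik
    · rcases eq_or_ne j l with rfl | hjl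
      · simp [hij]
        convert pair hij using 3
        ring
      · simp [hij, hjl, Ne.symm hij]
        convert lonely (a := i) (b := i) (c := l) (d := j) (Ne.symm hij) (Ne.symm hij) hjl
          using 3
        ring
    · rcases eq_or_ne i l with rfl | hil
      · rcases eq_or_ne j k with rfl | hjk
        · simp [hij, Ne.symm hij]
          convert pair hij using 3
          ring
        · simp [hij, hik, hjk, Ne.symm hik]
          convert lonely (a := i) (b := j) (c := i) (d := k) (Ne.symm hik) (Ne.symm hjk)
            (Ne.symm hik) using 3
          ring
      · simp [hij, hik, hil]
        convert lonely (a := j) (b := k) (c := l) (d := i) hij hik hil using 3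
        ring

end FourthMoments

lemma mulVec_inv_mulVec {n R : Type*} [Fintype n] [DecidableEq n] [CommRing R] {S : Matrix n n R}
    (hS : IsUnit S.det) (e : n → R) : S *ᵥ (S⁻¹ *ᵥ e) = e := by
  rw [mulVec_mulVec, mul_nonsing_inv S hS, one_mulVec]

section QuadraticForms

variable {R n ι : Type*} [CommSemiring R] [Fintype n] [Fintype ι]

lemma dotProduct_mulVec_self_eq_sum (A : Matrix ι ι R) (x : ι → R) :
    x ⬝ᵥ A *ᵥ x = ∑ i, ∑ j, A i j * (x i * x j) := by
  simp only [dotProduct, mulVec, Finset.mul_sum]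
  exact Finset.sum_congr rfl fun i _ => Finset.sum_congr rfl fun j _ => by ring

lemma dotProduct_mulVec_mul_dotProduct_mulVec (A B : Matrix ι ι R) (x : ι → R) :
    (x ⬝ᵥ A *ᵥ x) * (x ⬝ᵥ B *ᵥ x) =
      ∑ i, ∑ j, ∑ k, ∑ l, A i j * B k l * (x i * x j * x k * x l) := by
  -- distributing over the left factor first keeps the summation order `i, j, k, l`
  simp only [dotProduct_mulVec_self_eq_sum, Finset.sum_mul]
  simp only [Finset.mul_sum]
  exact Finset.sum_congr rfl fun i _ => Finset.sum_congr rfl fun j _ =>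
    Finset.sum_congr rfl fun k _ => Finset.sum_congr rfl fun l _ => by ring

lemma mulVec_dotProduct_mulVec_mulVec (F : Matrix n ι R) (C : Matrix n n R) (x : ι → R) :
    F *ᵥ x ⬝ᵥ C *ᵥ (F *ᵥ x) = x ⬝ᵥ (Fᵀ * C * F) *ᵥ x := by
  rw [← mulVec_mulVec, ← mulVec_mulVec, dotProduct_mulVec x, vecMul_transpose]

lemma trace_transpose_mul_mul (F : Matrix n ι R) (C : Matrix n n R) :
    (Fᵀ * C * F).trace = (C * (F * Fᵀ)).trace := by
  rw [trace_mul_cycle, trace_mul_comm]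

lemma trace_transpose_mul_mul_mul_transpose_mul_mul (F : Matrix n ι R) (C D : Matrix n n R) :
    (Fᵀ * C * F * (Fᵀ * D * F)).trace = (C * (F * Fᵀ) * D * (F * Fᵀ)).trace := by
  rw [← trace_transpose_mul_mul]
  simp only [Matrix.mul_assoc]

lemma transpose_fromCols_mul_mul_fromCols {p q : Type*} (S : Matrix n p R) (T : Matrix n q R)
    (C : Matrix n n R) :
    (fromCols S T)ᵀ * C * fromCols S T =
      fromBlocks (Sᵀ * C * S) (Sᵀ * C * T) (Tᵀ * C * S) (Tᵀ * C * T) := by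
  rw [transpose_fromCols, fromRows_mul, fromRows_mul_fromCols]

end QuadraticForms

section FourthMomentFormula

variable {Ω ι n : Type*} [MeasurableSpace Ω] {μ : Measure Ω} [Fintype ι] [DecidableEq ι]
  {X : Ω → ι → ℝ}

theorem integral_quadForm_mul_quadForm (hXm : ∀ i, Measurable fun ω => X ω i)
    (hX : iIndepFun (fun i ω => X ω i) μ) (hX4 : ∀ i, Integrable (fun ω => X ω i ^ 4) μ)
    (hX1 : ∀ i, ∫ ω, X ω i ∂μ = 0) (hX2 : ∀ i, ∫ ω, X ω i ^ 2 ∂μ = 1) (A B : Matrix ι ι ℝ) :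
    ∫ ω, (X ω ⬝ᵥ A *ᵥ X ω) * (X ω ⬝ᵥ B *ᵥ X ω) ∂μ =
      A.trace * B.trace + (A * Bᵀ).trace + (A * B).trace
        + ∑ i, A i i * B i i * (∫ ω, X ω i ^ 4 ∂μ - 3) := by
  have hint : ∀ i j k l, Integrable (fun ω => X ω i * X ω j * X ω k * X ω l) μ := fun i j k l =>
    integrable_mul_mul_mul_of_pow_four (hXm i) (hXm j) (hXm k) (hXm l)
      (hX4 i) (hX4 j) (hX4 k) (hX4 l)
  simp only [dotProduct_mulVec_mul_dotProduct_mulVec]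
  simp (disch := intros; fun_prop) only [integral_finsetSum, integral_const_mul,
    integral_mul_mul_mul_eq hXm hX hX1 hX2]
  simp only [Matrix.trace, Matrix.diag, Matrix.mul_apply, transpose_apply, Finset.sum_mul_sum,
    mul_add, Finset.sum_add_distrib, ite_and, mul_ite, mul_one, mul_zero, Finset.sum_ite_eq,
    Finset.mem_univ, if_true, Finset.sum_ite_irrel, Finset.sum_const_zero]

theorem integral_quadForm_mulVec_mul_quadForm_mulVec [Fintype n]
    (hXm : ∀ i, Measurable fun ω => X ω i)
    (hX : iIndepFun (fun i ω => X ω i) μ) (hX4 : ∀ i, Integrable (fun ω => X ω i ^ 4) μ)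
    (hX1 : ∀ i, ∫ ω, X ω i ∂μ = 0) (hX2 : ∀ i, ∫ ω, X ω i ^ 2 ∂μ = 1)
    (F : Matrix n ι ℝ) (C D : Matrix n n ℝ) (hD : D.IsSymm) :
    ∫ ω, (F *ᵥ X ω ⬝ᵥ C *ᵥ (F *ᵥ X ω)) * (F *ᵥ X ω ⬝ᵥ D *ᵥ (F *ᵥ X ω)) ∂μ =
      2 * (C * (F * Fᵀ) * D * (F * Fᵀ)).trace + (C * (F * Fᵀ)).trace * (D * (F * Fᵀ)).trace
        + ∑ i, (Fᵀ * C * F) i i * (Fᵀ * D * F) i i * (∫ ω, X ω i ^ 4 ∂μ - 3) := by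
  have hB : (Fᵀ * D * F)ᵀ = Fᵀ * D * F := by
    rw [transpose_mul, transpose_mul, transpose_transpose, hD.eq, Matrix.mul_assoc]
  simp only [mulVec_dotProduct_mulVec_mulVec]
  rw [integral_quadForm_mul_quadForm hXm hX hX4 hX1 hX2, hB, trace_transpose_mul_mul,
    trace_transpose_mul_mul, trace_transpose_mul_mul_mul_transpose_mul_mul]
  ring

end FourthMomentFormula

theorem stmt3_general {Ω : Type*} [MeasurableSpace Ω] (μ : Measure Ω) [IsProbabilityMeasure μ]
    {N m : ℕ} (ε : Ω → Fin N → ℝ) (v : Ω → Fin m → ℝ)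
    (Z : Matrix (Fin N) (Fin m) ℝ)
    (Re Se : Matrix (Fin N) (Fin N) ℝ) (Rv Sv : Matrix (Fin m) (Fin m) ℝ)
    (hSe : Se.PosDef) (hSesymm : Se.IsSymm) (hSesq : Se * Se = Re)
    (hSv : Sv.PosDef) (hSvsymm : Sv.IsSymm) (hSvsq : Sv * Sv = Rv)
    (Ke Kv : ℝ)
    (x : Ω → Fin N → ℝ) (hx : ∀ ω, x ω = Se⁻¹ *ᵥ ε ω)
    (w : Ω → Fin m → ℝ) (hw : ∀ ω, w ω = Sv⁻¹ *ᵥ v ω)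
    (hmeasx : ∀ i, Measurable fun ω => x ω i)
    (hmeasw : ∀ i, Measurable fun ω => w ω i)
    (hindepεv : IndepFun ε v μ)
    (hindepx : iIndepFun (fun i ω => x ω i) μ)
    (hindepw : iIndepFun (fun i ω => w ω i) μ)
    (hintx : ∀ i, Integrable (fun ω => (x ω i) ^ 4) μ)
    (hintw : ∀ i, Integrable (fun ω => (w ω i) ^ 4) μ)
    (hx1 : ∀ i, ∫ ω, x ω i ∂μ = 0)
    (hx2 : ∀ i, ∫ ω, (x ω i) ^ 2 ∂μ = 1)
    (hx4 : ∀ i, ∫ ω, (x ω i) ^ 4 ∂μ = Ke + 3)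
    (hw1 : ∀ i, ∫ ω, w ω i ∂μ = 0)
    (hw2 : ∀ i, ∫ ω, (w ω i) ^ 2 ∂μ = 1)
    (hw4 : ∀ i, ∫ ω, (w ω i) ^ 4 ∂μ = Kv + 3)
    (u : Ω → Fin N → ℝ) (hu : ∀ ω, u ω = ε ω + Z *ᵥ v ω)
    (C D : Matrix (Fin N) (Fin N) ℝ) (hD : D.IsSymm)
    (Sig : Matrix (Fin N) (Fin N) ℝ) (hSig : Sig = Re + Z * Rv * Zᵀ) :
    ∫ ω, (u ω ⬝ᵥ C *ᵥ u ω) * (u ω ⬝ᵥ D *ᵥ u ω) ∂μ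
      = 2 * (C * Sig * D * Sig).trace + (C * Sig).trace * (D * Sig).trace
        + Ke * ∑ i, (Se * C * Se) i i * (Se * D * Se) i i
        + Kv * ∑ i, (Sv * Zᵀ * C * Z * Sv) i i * (Sv * Zᵀ * D * Z * Sv) i i := by
  set F := fromCols Se (Z * Sv)
  have hSe_det : IsUnit Se.det := isUnit_iff_ne_zero.2 hSe.det_pos.ne'
  have hSv_det : IsUnit Sv.det := isUnit_iff_ne_zero.2 hSv.det_pos.ne'
  have hu_eq : ∀ ω, u ω = F *ᵥ Sum.elim (x ω) (w ω) := fun ω => by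
    rw [hu, fromCols_mulVec_sumElim, ← mulVec_mulVec, hx, hw, mulVec_inv_mulVec hSe_det,
      mulVec_inv_mulVec hSv_det]
  have hF : F * Fᵀ = Sig := by
    rw [transpose_fromCols, fromCols_mul_fromRows, hSesymm.eq, hSesq, transpose_mul,
      hSvsymm.eq, hSig, ← hSvsq]
    simp only [Matrix.mul_assoc]
  have hxw : IndepFun x w μ := by
    rw [show x = (Se⁻¹ *ᵥ ·) ∘ ε from funext hx, show w = (Sv⁻¹ *ᵥ ·) ∘ v from funext hw]
    exact hindepεv.comp (by fun_prop) (by fun_prop)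
  simp only [hu_eq]
  rw [integral_quadForm_mulVec_mul_quadForm_mulVec (Sum.forall.2 ⟨hmeasx, hmeasw⟩)
    (iIndepFun_sumElim hmeasx hmeasw hindepx hindepw hxw) (Sum.forall.2 ⟨hintx, hintw⟩)
    (Sum.forall.2 ⟨hx1, hw1⟩) (Sum.forall.2 ⟨hx2, hw2⟩) F C D hD, hF]
  have hblocks : ∀ M, Fᵀ * M * F =
      fromBlocks (Se * M * Se) (Se * M * (Z * Sv)) (Sv * Zᵀ * M * Se) (Sv * Zᵀ * M * Z * Sv) := by
    intro M
    rw [transpose_fromCols_mul_mul_fromCols, hSesymm.eq, transpose_mul, hSvsymm.eq,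
      Matrix.mul_assoc _ Z]
  rw [Fintype.sum_sum_type]
  simp only [hblocks, fromBlocks_apply₁₁, fromBlocks_apply₂₂, Sum.elim_inl, Sum.elim_inr, hx4, hw4,
    add_sub_cancel_right, ← Finset.sum_mul]
  ring

/-- Let `u = ε + Z v` with `ε`, `v` independent, mean zero, covariances
`Rₑ`, `Rᵥ`, and standardized coordinates `x = Rₑ^{-1/2} ε`, `w = Rᵥ^{-1/2} v` each with
independent coordinates of mean `0`, variance `1` and fourth moments `Kₑ + 3`, `Kᵥ + 3`.
Then for symmetric `C`, `D` and `Σ = Rₑ + Z Rᵥ Zᵀ`: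
`E[(uᵀCu)(uᵀDu)] = 2 tr(CΣDΣ) + tr(CΣ) tr(DΣ) + Kₑ hₑ(C,D) + Kᵥ hᵥ(C,D)`. -/
theorem stmt3 {Ω : Type*} [MeasurableSpace Ω] (μ : Measure Ω) [IsProbabilityMeasure μ]
    {N m : ℕ} (ε : Ω → Fin N → ℝ) (v : Ω → Fin m → ℝ)
    (Z : Matrix (Fin N) (Fin m) ℝ)
    (Re Se : Matrix (Fin N) (Fin N) ℝ) (Rv Sv : Matrix (Fin m) (Fin m) ℝ)
    (hRe : Re.PosDef) (hSe : Se.PosDef) (hSesymm : Se.IsSymm) (hSesq : Se * Se = Re)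
    (hRv : Rv.PosDef) (hSv : Sv.PosDef) (hSvsymm : Sv.IsSymm) (hSvsq : Sv * Sv = Rv)
    (Ke Kv : ℝ)
    (x : Ω → Fin N → ℝ) (hx : ∀ ω, x ω = Se⁻¹ *ᵥ ε ω)
    (w : Ω → Fin m → ℝ) (hw : ∀ ω, w ω = Sv⁻¹ *ᵥ v ω)
    (hmeasx : ∀ i, Measurable fun ω => x ω i)
    (hmeasw : ∀ i, Measurable fun ω => w ω i)
    (hindepεv : IndepFun ε v μ)
    (hindepx : iIndepFun (fun i ω => x ω i) μ)
    (hindepw : iIndepFun (fun i ω => w ω i) μ)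
    (hintx : ∀ i, Integrable (fun ω => (x ω i) ^ 4) μ)
    (hintw : ∀ i, Integrable (fun ω => (w ω i) ^ 4) μ)
    (hx1 : ∀ i, ∫ ω, x ω i ∂μ = 0)
    (hx2 : ∀ i, ∫ ω, (x ω i) ^ 2 ∂μ = 1)
    (hx4 : ∀ i, ∫ ω, (x ω i) ^ 4 ∂μ = Ke + 3)
    (hw1 : ∀ i, ∫ ω, w ω i ∂μ = 0)
    (hw2 : ∀ i, ∫ ω, (w ω i) ^ 2 ∂μ = 1)
    (hw4 : ∀ i, ∫ ω, (w ω i) ^ 4 ∂μ = Kv + 3)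
    (u : Ω → Fin N → ℝ) (hu : ∀ ω, u ω = ε ω + Z *ᵥ v ω)
    (C D : Matrix (Fin N) (Fin N) ℝ) (hC : C.IsSymm) (hD : D.IsSymm)
    (Sig : Matrix (Fin N) (Fin N) ℝ) (hSig : Sig = Re + Z * Rv * Zᵀ) :
    ∫ ω, (u ω ⬝ᵥ C *ᵥ u ω) * (u ω ⬝ᵥ D *ᵥ u ω) ∂μ
      = 2 * (C * Sig * D * Sig).trace + (C * Sig).trace * (D * Sig).trace
        + Ke * ∑ i, (Se * C * Se) i i * (Se * D * Se) i i
        + Kv * ∑ i, (Sv * Zᵀ * C * Z * Sv) i i * (Sv * Zᵀ * D * Z * Sv) i i :=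
  stmt3_general μ ε v Z Re Se Rv Sv hSe hSesymm hSesq hSv hSvsymm hSvsq Ke Kv x hx w hw hmeasx
    hmeasw hindepεv hindepx hindepw hintx hintw hx1 hx2 hx4 hw1 hw2 hw4 u hu C D hD Sig hSig
end

section
/- Let Σ be a symmetric positive definite N×N matrix and W a symmetric N×N matrix with tr(W) ≠ 0. Then tr(WΣWΣ)·tr(Σ^{-2}) ≥ (tr(W))². -/
/-!
Write `Σ = S * S` with `S` the symmetric square root of `Σ`. The Cauchy–Schwarz inequality for the
Frobenius inner product `⟨A, B⟩ = tr (Aᵀ B)`, applied to `A = S W S` and `B = Σ⁻¹`, gives the claim,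
because `⟨A, B⟩ = tr W`, `⟨A, A⟩ = tr (W Σ W Σ)` and `⟨B, B⟩ = tr (Σ⁻²)`.
-/

open Matrix
open scoped MatrixOrder

namespace Matrix

variable {m n R : Type*}

theorem trace_transpose_mul_sq_le [Fintype m] [Fintype n] [CommRing R] [LinearOrder R]
    [IsStrictOrderedRing R] (A B : Matrix m n R) :
    (Aᵀ * B).trace ^ 2 ≤ (Aᵀ * A).trace * (Bᵀ * B).trace := by
  simp only [← vec_dotProduct_vec, dotProduct, ← sq]
  exact Finset.sum_mul_sq_le_sq_mul_sq _ _ _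

theorem trace_sq_le_trace_mul_mul_trace_inv_mul_inv [Fintype n] [DecidableEq n] [Field R]
    [LinearOrder R] [IsStrictOrderedRing R] {S W : Matrix n n R} (hS : S.IsSymm)
    (hSdet : IsUnit S.det) (hW : W.IsSymm) :
    W.trace ^ 2 ≤ (W * (S * S) * W * (S * S)).trace * ((S * S)⁻¹ * (S * S)⁻¹).trace := by
  have hA : (S * W * S)ᵀ = S * W * S := by
    rw [transpose_mul, transpose_mul, hS.eq, hW.eq, Matrix.mul_assoc]
  have hB : ((S * S)⁻¹)ᵀ = (S * S)⁻¹ := by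
    rw [transpose_nonsing_inv, transpose_mul, hS.eq]
  have htrW : (S * W * S * (S * S)⁻¹).trace = W.trace := by
    rw [mul_inv_rev, ← Matrix.mul_assoc, mul_nonsing_inv_cancel_right S _ hSdet, trace_mul_cycle,
      nonsing_inv_mul S hSdet, Matrix.one_mul]
  have htrWSig : (S * W * S * (S * W * S)).trace = (W * (S * S) * W * (S * S)).trace := by
    simp only [Matrix.mul_assoc]
    rw [trace_mul_comm S]
    simp only [Matrix.mul_assoc]
  have cauchy_schwarz := trace_transpose_mul_sq_le (S * W * S) (S * S)⁻¹
  rwa [hA, hB, htrW, htrWSig] at cauchy_schwarz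

end Matrix

theorem stmt5_general {N : ℕ} (Sig W : Matrix (Fin N) (Fin N) ℝ)
    (hSig : Sig.PosDef) (hW : W.IsSymm) :
    (W.trace) ^ 2 ≤ (W * Sig * W * Sig).trace * (Sig⁻¹ * Sig⁻¹).trace := by
  set S := CFC.sqrt Sig
  have hS : S.IsSymm := isHermitian_iff_isSymm.mp (CFC.sqrt_nonneg Sig).posSemidef.isHermitian
  have hSS : S * S = Sig := CFC.sqrt_mul_sqrt_self Sig hSig.posSemidef.nonneg
  have hSdet : IsUnit S.det :=
    isUnit_of_mul_isUnit_left (by rw [← det_mul, hSS]; exact hSig.isUnit.map detMonoidHom)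
  rw [← hSS]
  exact trace_sq_le_trace_mul_mul_trace_inv_mul_inv hS hSdet hW

/-- For a symmetric positive definite `N × N` matrix `Σ` and a symmetric
matrix `W` with `tr W ≠ 0`, one has `tr(WΣWΣ) · tr(Σ⁻²) ≥ (tr W)²`. -/
theorem stmt5 {N : ℕ} (Sig W : Matrix (Fin N) (Fin N) ℝ)
    (hSig : Sig.PosDef) (hSigsymm : Sig.IsSymm) (hW : W.IsSymm)
    (htr : W.trace ≠ 0) :
    (W.trace) ^ 2 ≤ (W * Sig * W * Sig).trace * (Sig⁻¹ * Sig⁻¹).trace :=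
  stmt5_general Sig W hSig hW
end
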